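/- arXiv:1102.1541 — 2 statements merged into one kernel-verified Lean document; each statement's English description precedes it below -/
import Mathlib

section
/- Define σ ≡ σ' for σ, σ' ∈ S_n if σ and σ' have the same sets of values and positions of left-to-right minima and the same sets of values and positions of right-to-left maxima. Then every equivalence class of ≡ contains exactly one 1234-avoiding permutation, namely the one in which the entries that are neither LTR minima nor RTL maxima appear in decreasing order. -/
/-- A Dyck word: `true` = up step, `false` = down step. -/
def IsDyckWord (p : List Bool) : Prop :=
  (∀ t, t <+: p → t.count false ≤ t.count true) ∧ p.count true = p.count false

/-- Successive differences of a list (with an implicit initial 0). -/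
def diffs (l : List ℕ) : List ℕ := l.zipWith (· - ·) (0 :: l)

/-- The Dyck path of semilength `n` with ascent-descent code `(A, D)`. -/
def pathOfCode (n : ℕ) (A D : List ℕ) : List Bool :=
  ((diffs (A ++ [n])).zip (diffs (D ++ [n]))).flatMap
    fun ad => List.replicate ad.1 true ++ List.replicate ad.2 false

def IsLTRMin {n : ℕ} (σ : Equiv.Perm (Fin n)) (i : Fin n) : Prop := ∀ j, j < i → σ i < σ j
def IsRTLMax {n : ℕ} (σ : Equiv.Perm (Fin n)) (i : Fin n) : Prop := ∀ j, i < j → σ j < σ i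

instance {n : ℕ} (σ : Equiv.Perm (Fin n)) (i : Fin n) : Decidable (IsLTRMin σ i) := by
  unfold IsLTRMin; infer_instance
instance {n : ℕ} (σ : Equiv.Perm (Fin n)) (i : Fin n) : Decidable (IsRTLMax σ i) := by
  unfold IsRTLMax; infer_instance

def pmin {n : ℕ} (σ : Equiv.Perm (Fin n)) : Set (Fin n) := {i | IsLTRMin σ i}
def vmin {n : ℕ} (σ : Equiv.Perm (Fin n)) : Set (Fin n) := σ '' pmin σ
def pmax {n : ℕ} (σ : Equiv.Perm (Fin n)) : Set (Fin n) := {i | IsRTLMax σ i}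
def vmax {n : ℕ} (σ : Equiv.Perm (Fin n)) : Set (Fin n) := σ '' pmax σ

/-- Reverse-complement of a permutation. -/
def rcPerm {n : ℕ} (σ : Equiv.Perm (Fin n)) : Equiv.Perm (Fin n) :=
  (Fin.revPerm.trans σ).trans Fin.revPerm

def Avoids123 {n : ℕ} (σ : Equiv.Perm (Fin n)) : Prop :=
  ¬ ∃ i j k : Fin n, i < j ∧ j < k ∧ σ i < σ j ∧ σ j < σ k

def Avoids1234 {n : ℕ} (σ : Equiv.Perm (Fin n)) : Prop :=
  ¬ ∃ i j k l : Fin n, i < j ∧ j < k ∧ k < l ∧ σ i < σ j ∧ σ j < σ k ∧ σ k < σ l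

/-- The value (1-based) of the previous LTR minimum before position `i` (`n+1` if none). -/
def prevMinVal {n : ℕ} (σ : Equiv.Perm (Fin n)) (i : Fin n) : ℕ :=
  ((((List.finRange n).filter fun j => decide (j < i)).map fun j => (σ j : ℕ) + 1)).foldr min (n + 1)

/-- The map λ: each LTR minimum m_i gives m_{i-1} - m_i up steps, each maximal
block of ℓ non-minima gives ℓ+1 down steps. -/
def lamWord {n : ℕ} (σ : Equiv.Perm (Fin n)) : List Bool :=
  ((List.finRange n).flatMap fun i =>
    if IsLTRMin σ i then
      (if (i : ℕ) = 0 then [] else [false]) ++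
        List.replicate (prevMinVal σ i - ((σ i : ℕ) + 1)) true
    else [false]) ++ List.replicate (min n 1) false

/-- The value (1-based) of the largest entry to the right of position `i` (`0` if none). -/
def nextMaxVal {n : ℕ} (σ : Equiv.Perm (Fin n)) (i : Fin n) : ℕ :=
  ((((List.finRange n).filter fun j => decide (i < j)).map fun j => (σ j : ℕ) + 1)).foldr max 0

/-- The map μ: reading right to left, each RTL maximum M_i gives U^(M_i-M_{i-1}) D,
each non-maximum gives a D step. -/
def muWord {n : ℕ} (σ : Equiv.Perm (Fin n)) : List Bool :=
  (List.finRange n).reverse.flatMap fun i =>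
    if IsRTLMax σ i then
      List.replicate (((σ i : ℕ) + 1) - nextMaxVal σ i) true ++ [false]
    else [false]

/-- The set of partial sums of ascent lengths of a Dyck word (including the total). -/
def ascCode (p : List Bool) : Finset ℕ :=
  ((Finset.range p.length).filter fun i =>
      0 < i ∧ p.getD (i-1) false = true ∧ p.getD i true = false).image
    fun i => (p.take i).count true

/-- The set of partial sums of descent lengths of a Dyck word (excluding the total). -/
def descCode (p : List Bool) : Finset ℕ :=
  ((Finset.range p.length).filter fun i =>
      0 < i ∧ p.getD (i-1) true = false ∧ p.getD i false = true).image
    fun i => (p.take i).count false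

/-- Index of the first return of a Dyck word. -/
def firstRet (p : List Bool) : ℕ :=
  (((List.range (p.length + 1)).filter fun i =>
      decide (0 < i) && decide ((p.take i).count true = (p.take i).count false)).head?).getD p.length

def compsAux : ℕ → List Bool → List (List Bool)
  | 0, _ => []
  | fuel+1, p => if p = [] then [] else
      p.take (firstRet p) :: compsAux fuel (p.drop (firstRet p))

/-- Decomposition of a Dyck word into irreducible components. -/
def comps (p : List Bool) : List (List Bool) := compsAux p.length p

/-- The involution L' on an irreducible Dyck path, via ascent-descent codes. -/
def LprimeIrr (p : List Bool) : List Bool :=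
  let n := p.count true
  let A' := ((Finset.Icc 1 (n-2) \ ((ascCode p).erase n).image fun a => a - 1).image
      fun a => n - a).sort (· ≤ ·)
  let D' := ((Finset.Icc 1 (n-2) \ descCode p).image fun d => n - 1 - d).sort (· ≤ ·)
  pathOfCode n A' D'

/-- The involution L', acting on each irreducible component. -/
def LprimeWord (p : List Bool) : List Bool := (comps p).reverse.flatMap LprimeIrr

def ascList (p : List Bool) : List ℕ := ((ascCode p).erase (p.count true)).sort (· ≤ ·)
def descList (p : List Bool) : List ℕ := (descCode p).sort (· ≤ ·)

def IrreducibleDyck (p : List Bool) : Prop :=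
  IsDyckWord p ∧ p ≠ [] ∧ ∀ t, t <+: p → t ≠ [] → t ≠ p → t.count false < t.count true

/-- Covering relation: `Q` covers `P` if the code of `Q` is obtained from the code of
`P` by deleting `A_i` from the ascent code and `D_j` from the descent code, `i ≤ j`. -/
def CoversIrr (P Q : List Bool) : Prop :=
  IrreducibleDyck P ∧ IrreducibleDyck Q ∧
  ∃ i j : ℕ, i ≤ j ∧ ascList Q = (ascList P).eraseIdx i ∧ descList Q = (descList P).eraseIdx j

/-- The order relation on Dyck paths. -/
def DyckLE (P Q : List Bool) : Prop :=
  List.Forall₂ (Relation.ReflTransGen CoversIrr) (comps P) (comps Q)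

/-- σ ≡ σ' iff they share values and positions of LTR minima and of RTL maxima. -/
def PermEquiv {n : ℕ} (σ τ : Equiv.Perm (Fin n)) : Prop :=
  vmin σ = vmin τ ∧ pmin σ = pmin τ ∧ vmax σ = vmax τ ∧ pmax σ = pmax τ

/-- The entries of τ that are neither LTR minima nor RTL maxima appear in decreasing order. -/
def NonSpecialDecreasing {n : ℕ} (τ : Equiv.Perm (Fin n)) : Prop :=
  ∀ i j : Fin n, i < j → ¬ IsLTRMin τ i → ¬ IsRTLMax τ i →
    ¬ IsLTRMin τ j → ¬ IsRTLMax τ j → τ j < τ i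

/-!
Both LTR minima and RTL maxima form decreasing subsequences, so a class member whose remaining
entries also decrease is determined by the class: on each of the three groups of positions it is
the unique decreasing arrangement of a prescribed set of values. Such a member avoids 1234, since
the two middle entries of a 1234 pattern are neither LTR minima nor RTL maxima; conversely an
increasing pair of such entries in a 1234-avoider would extend, by an earlier LTR minimum and a
later RTL maximum, to a 1234 pattern. It exists: swapping an increasing pair of entries that are
neither LTR minima nor RTL maxima stays in the class and strictly decreases `∑ a * τ a`, so a
minimiser of that sum over the class has no such pair.
-/

open Equiv

theorem StrictAntiOn.eqOn_of_image_eq {α β : Type*} [LinearOrder α] [WellFoundedGT α]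
    [Preorder β] {f g : α → β} {s : Set α} (hf : StrictAntiOn f s) (hg : StrictAntiOn g s)
    (h : f '' s = g '' s) : s.EqOn f g := by
  rw [Set.strictAntiOn_iff_strictAnti] at hf hg
  rw [Set.image_eq_range, Set.image_eq_range, hf.range_inj hg] at h
  exact fun x hx => congrFun h ⟨x, hx⟩

theorem Fintype.sum_mul_comp_swap_lt {ι R : Type*} [Fintype ι] [DecidableEq ι] [CommRing R]
    [LinearOrder R] [IsStrictOrderedRing R] {f g : ι → R} {i j : ι} (hg : g i < g j)
    (hf : f i < f j) : ∑ a, g a * f (swap i j a) < ∑ a, g a * f a := by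
  have hij : i ≠ j := ne_of_apply_ne g hg.ne
  rw [← sub_pos, ← Finset.sum_sub_distrib, Fintype.sum_eq_add i j hij]
  · simp only [swap_apply_left, swap_apply_right]
    nlinarith
  · rintro x ⟨hxi, hxj⟩
    rw [swap_apply_of_ne_of_ne hxi hxj, sub_self]

namespace PermEquiv

variable {n : ℕ} {σ τ υ : Perm (Fin n)}

theorem symm (h : PermEquiv σ τ) : PermEquiv τ σ :=
  ⟨h.1.symm, h.2.1.symm, h.2.2.1.symm, h.2.2.2.symm⟩

theorem trans (h : PermEquiv σ τ) (h' : PermEquiv τ υ) : PermEquiv σ υ :=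
  ⟨h.1.trans h'.1, h.2.1.trans h'.2.1, h.2.2.1.trans h'.2.2.1, h.2.2.2.trans h'.2.2.2⟩

end PermEquiv

section LTRMinRTLMax

variable {n : ℕ} {τ τ' : Perm (Fin n)} {p : Fin n}

theorem exists_isLTRMin_lt (hp : ¬ IsLTRMin τ p) : ∃ a, IsLTRMin τ a ∧ a < p ∧ τ a < τ p := by
  obtain ⟨q, hqp, hq⟩ : ∃ q < p, τ q ≤ τ p := by simpa [IsLTRMin] using hp
  obtain ⟨a, ha, hmin⟩ := (Finset.Iio p).exists_min_image τ ⟨q, Finset.mem_Iio.2 hqp⟩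
  rw [Finset.mem_Iio] at ha
  refine ⟨a, fun b hba => ?_, ha, ?_⟩
  · exact (hmin b (Finset.mem_Iio.2 (hba.trans ha))).lt_of_ne (τ.injective.ne hba.ne')
  · exact ((hmin q (Finset.mem_Iio.2 hqp)).trans hq).lt_of_ne (τ.injective.ne ha.ne)

theorem exists_isRTLMax_gt (hp : ¬ IsRTLMax τ p) : ∃ a, IsRTLMax τ a ∧ p < a ∧ τ p < τ a := by
  obtain ⟨q, hpq, hq⟩ : ∃ q, p < q ∧ τ p ≤ τ q := by simpa [IsRTLMax] using hp
  obtain ⟨a, ha, hmax⟩ := (Finset.Ioi p).exists_max_image τ ⟨q, Finset.mem_Ioi.2 hpq⟩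
  rw [Finset.mem_Ioi] at ha
  refine ⟨a, fun b hab => ?_, ha, ?_⟩
  · exact (hmax b (Finset.mem_Ioi.2 (ha.trans hab))).lt_of_ne (τ.injective.ne hab.ne')
  · exact (hq.trans (hmax q (Finset.mem_Ioi.2 hpq))).lt_of_ne (τ.injective.ne ha.ne)

theorem strictAntiOn_pmin (τ : Perm (Fin n)) : StrictAntiOn τ (pmin τ) :=
  fun _ _ _ hb hab => hb _ hab

theorem strictAntiOn_pmax (τ : Perm (Fin n)) : StrictAntiOn τ (pmax τ) :=
  fun _ ha _ _ hab => ha _ hab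

theorem pmin_eq_of_eqOn (heq : (pmin τ).EqOn τ' τ)
    (hwit : ∀ p ∉ pmin τ, ∃ a ∈ pmin τ, a < p ∧ τ a < τ' p) : pmin τ' = pmin τ := by
  ext p
  constructor
  · intro hp
    by_contra hnp
    obtain ⟨a, ha, hap, hlt⟩ := hwit p hnp
    exact (hp a hap).not_gt (heq ha ▸ hlt)
  · intro hp q hqp
    rw [heq hp]
    by_cases hq : q ∈ pmin τ
    · exact heq hq ▸ hp q hqp
    · obtain ⟨a, ha, haq, hlt⟩ := hwit q hq
      exact (hp a (haq.trans hqp)).trans hlt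

theorem pmax_eq_of_eqOn (heq : (pmax τ).EqOn τ' τ)
    (hwit : ∀ p ∉ pmax τ, ∃ a ∈ pmax τ, p < a ∧ τ' p < τ a) : pmax τ' = pmax τ := by
  ext p
  constructor
  · intro hp
    by_contra hnp
    obtain ⟨a, ha, hpa, hlt⟩ := hwit p hnp
    exact (hp a hpa).not_gt (heq ha ▸ hlt)
  · intro hp q hpq
    rw [heq hp]
    by_cases hq : q ∈ pmax τ
    · exact heq hq ▸ hp q hpq
    · obtain ⟨a, ha, hqa, hlt⟩ := hwit q hq
      exact hlt.trans (hp a (hpq.trans hqa))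

end LTRMinRTLMax

section ClassMembers

variable {n : ℕ} {τ τ' : Perm (Fin n)}

theorem NonSpecialDecreasing.strictAntiOn (h : NonSpecialDecreasing τ) :
    StrictAntiOn τ (pmin τ ∪ pmax τ)ᶜ := by
  intro a ha b hb hab
  simp only [Set.mem_compl_iff, Set.mem_union, not_or] at ha hb
  exact h a b hab ha.1 ha.2 hb.1 hb.2

theorem Avoids1234.nonSpecialDecreasing (h : Avoids1234 τ) : NonSpecialDecreasing τ := by
  intro i j hij hmi _ _ hxj
  by_contra hji
  have hij' : τ i < τ j := (not_lt.1 hji).lt_of_ne (τ.injective.ne hij.ne)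
  obtain ⟨a, -, hai, ha⟩ := exists_isLTRMin_lt hmi
  obtain ⟨b, -, hjb, hb⟩ := exists_isRTLMax_gt hxj
  exact h ⟨a, i, j, b, hai, hij, hjb, ha, hij', hb⟩

theorem NonSpecialDecreasing.avoids1234 (h : NonSpecialDecreasing τ) : Avoids1234 τ := by
  rintro ⟨i, j, k, l, hij, hjk, hkl, hvij, hvjk, hvkl⟩
  have hmj : ¬ IsLTRMin τ j := fun hj => (hj i hij).not_gt hvij
  have hxj : ¬ IsRTLMax τ j := fun hj => (hj k hjk).not_gt hvjk
  have hmk : ¬ IsLTRMin τ k := fun hk => (hk j hjk).not_gt hvjk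
  have hxk : ¬ IsRTLMax τ k := fun hk => (hk l hkl).not_gt hvkl
  exact (h j k hjk hmj hxj hmk hxk).not_gt hvjk

theorem eq_of_permEquiv (h : PermEquiv τ τ') (hd : NonSpecialDecreasing τ)
    (hd' : NonSpecialDecreasing τ') : τ = τ' := by
  obtain ⟨hvmin, hpmin, hvmax, hpmax⟩ := h
  have hmin : (pmin τ).EqOn τ τ' := by
    refine (strictAntiOn_pmin τ).eqOn_of_image_eq ?_ ?_
    · exact hpmin ▸ strictAntiOn_pmin τ'
    · simpa only [vmin, hpmin] using hvmin
  have hmax : (pmax τ).EqOn τ τ' := by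
    refine (strictAntiOn_pmax τ).eqOn_of_image_eq ?_ ?_
    · exact hpmax ▸ strictAntiOn_pmax τ'
    · simpa only [vmax, hpmax] using hvmax
  have hrest : (pmin τ ∪ pmax τ)ᶜ.EqOn τ τ' := by
    refine hd.strictAntiOn.eqOn_of_image_eq ?_ ?_
    · exact hpmin ▸ hpmax ▸ hd'.strictAntiOn
    · rw [Set.image_compl_eq τ.bijective, Set.image_compl_eq τ'.bijective, Set.image_union,
        Set.image_union, hmin.image_eq, hmax.image_eq]
  have hall := (hmin.union hmax).union hrest
  rw [Set.union_compl_self] at hall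
  exact Equiv.ext fun x => hall (Set.mem_univ x)

/-- The witnesses that `i` is no LTR minimum and `j` no RTL maximum serve for both swapped
entries. -/
theorem permEquiv_mul_swap {i j : Fin n} (hij : i < j) (hv : τ i < τ j)
    (hmi : ¬ IsLTRMin τ i) (hxi : ¬ IsRTLMax τ i) (hmj : ¬ IsLTRMin τ j)
    (hxj : ¬ IsRTLMax τ j) : PermEquiv τ (τ * swap i j) := by
  have heqOn : ∀ s : Set (Fin n), i ∉ s → j ∉ s → s.EqOn (τ * swap i j) τ :=
    fun s hi hj x hx => by
      rw [Perm.mul_apply, swap_apply_of_ne_of_ne (ne_of_mem_of_not_mem hx hi)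
        (ne_of_mem_of_not_mem hx hj)]
  have hmin := heqOn (pmin τ) hmi hmj
  have hmax := heqOn (pmax τ) hxi hxj
  obtain ⟨a, ha, hai, hav⟩ := exists_isLTRMin_lt hmi
  obtain ⟨b, hb, hjb, hbv⟩ := exists_isRTLMax_gt hxj
  have hpmin : pmin (τ * swap i j) = pmin τ := by
    refine pmin_eq_of_eqOn hmin fun p hp => ?_
    rcases eq_or_ne p i with rfl | hpi
    · exact ⟨a, ha, hai, by simpa using hav.trans hv⟩
    rcases eq_or_ne p j with rfl | hpj
    · exact ⟨a, ha, hai.trans hij, by simpa using hav⟩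
    obtain ⟨c, hc, hcp, hcv⟩ := exists_isLTRMin_lt hp
    exact ⟨c, hc, hcp, by rwa [Perm.mul_apply, swap_apply_of_ne_of_ne hpi hpj]⟩
  have hpmax : pmax (τ * swap i j) = pmax τ := by
    refine pmax_eq_of_eqOn hmax fun p hp => ?_
    rcases eq_or_ne p i with rfl | hpi
    · exact ⟨b, hb, hij.trans hjb, by simpa using hbv⟩
    rcases eq_or_ne p j with rfl | hpj
    · exact ⟨b, hb, hjb, by simpa using hv.trans hbv⟩
    obtain ⟨c, hc, hpc, hcv⟩ := exists_isRTLMax_gt hp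
    exact ⟨c, hc, hpc, by rwa [Perm.mul_apply, swap_apply_of_ne_of_ne hpi hpj]⟩
  refine ⟨?_, hpmin.symm, ?_, hpmax.symm⟩
  · rw [vmin, vmin, hpmin, hmin.image_eq]
  · rw [vmax, vmax, hpmax, hmax.image_eq]

theorem exists_permEquiv_nonSpecialDecreasing (σ : Perm (Fin n)) :
    ∃ τ, PermEquiv σ τ ∧ NonSpecialDecreasing τ := by
  classical
  obtain ⟨τ, hτ, hmin⟩ := (Finset.univ.filter (PermEquiv σ)).exists_min_image
    (fun τ : Perm (Fin n) => ∑ a : Fin n, ((a : ℕ) : ℤ) * ((τ a : ℕ) : ℤ)) ⟨σ, by simp [PermEquiv]⟩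
  rw [Finset.mem_filter] at hτ
  refine ⟨τ, hτ.2, fun i j hij hmi hxi hmj hxj => ?_⟩
  by_contra hji
  have hv : τ i < τ j := (not_lt.1 hji).lt_of_ne (τ.injective.ne hij.ne)
  have hswap := hτ.2.trans (permEquiv_mul_swap hij hv hmi hxi hmj hxj)
  refine (hmin _ (Finset.mem_filter.2 ⟨Finset.mem_univ _, hswap⟩)).not_gt ?_
  exact Fintype.sum_mul_comp_swap_lt (g := fun a => ((a : ℕ) : ℤ)) (f := fun a => ((τ a : ℕ) : ℤ))
    (by exact_mod_cast hij) (by exact_mod_cast hv)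

end ClassMembers

/-- Every equivalence class of ≡ contains exactly one 1234-avoiding permutation,
namely the one whose non-minima-non-maxima entries appear in decreasing order. -/
theorem existsUnique_avoids1234_in_class {n : ℕ} (σ : Equiv.Perm (Fin n)) :
    (∃! τ : Equiv.Perm (Fin n), PermEquiv σ τ ∧ Avoids1234 τ) ∧
      ∀ τ : Equiv.Perm (Fin n), PermEquiv σ τ → Avoids1234 τ → NonSpecialDecreasing τ := by
  obtain ⟨τ, hστ, hτ⟩ := exists_permEquiv_nonSpecialDecreasing σ
  refine ⟨⟨τ, ⟨hστ, hτ.avoids1234⟩, ?_⟩, fun _ _ h => h.nonSpecialDecreasing⟩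
  rintro τ' ⟨hστ', h'⟩
  exact eq_of_permEquiv (hστ'.symm.trans hστ) h'.nonSpecialDecreasing hτ
end

section
/- For σ ∈ S_n with LTR minima m_1 > m_2 > ... > m_k at positions p_1 < p_2 < ... < p_k, the ascent-descent code (A, D) of the Dyck path λ(σ) is given by A_i = n + 1 − m_i for 1 ≤ i ≤ k−1 and D_i = p_{i+1} − 1 for 1 ≤ i ≤ k−1. -/
/-- The (increasing) list of positions of the LTR minima of σ. -/
def pminList {n : ℕ} (σ : Equiv.Perm (Fin n)) : List (Fin n) :=
  (List.finRange n).filter fun i => decide (IsLTRMin σ i)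

/-!
Read λ(σ) position by position: position `k` contributes `U^{a_k} D`, where `a_k` is the drop of
the running minimum at `k` (zero unless `k` is an LTR minimum). Cutting `0, …, n-1` into the runs
`[p_i, p_{i+1})` between consecutive LTR minima turns this into the blocks
`U^{a_{p_i}} D^{p_{i+1} - p_i}` of a code whose descent sums are the positions `p_{i+1}`. Just
before `p_{i+1}` the running minimum is attained at `p_i`, so `a_{p_{i+1}} = σ(p_i) - σ(p_{i+1})`:
the ascents are the successive differences of `n - σ(p_i)`, whose last value is `n` because the
last LTR minimum is the entry `0`.
-/

open List

namespace List

theorem flatMap_append_shift {α β : Type*} (s : List β) (u : α → List β) (l : List α) :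
    (l.flatMap fun i => s ++ u i) ++ s = s ++ l.flatMap fun i => u i ++ s := by
  induction l with
  | nil => simp
  | cons x l ih => simp [ih]

theorem le_foldr_min {α : Type*} [LinearOrder α] {l : List α} {a b : α} (hb : b ≤ a)
    (hl : ∀ y ∈ l, b ≤ y) : b ≤ l.foldr min a := by
  induction l with
  | nil => exact hb
  | cons y l ih => exact le_min (hl y mem_cons_self) (ih fun z hz => hl z (mem_cons_of_mem y hz))

theorem foldr_min_eq_of_mem {α : Type*} [LinearOrder α] {l : List α} {a x : α} (hx : x ∈ l)
    (hxa : x ≤ a) (hl : ∀ y ∈ l, x ≤ y) : l.foldr min a = x :=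
  le_antisymm (min_le_of_le' a hx le_rfl) (le_foldr_min hxa hl)

theorem flatMap_range'_of_eq_zero (u : ℕ → ℕ) {a m : ℕ}
    (hu : ∀ i, a < i → i ≤ a + m → u i = 0) :
    (range' a (m + 1)).flatMap (fun i => replicate (u i) true ++ [false]) =
      replicate (u a) true ++ replicate (m + 1) false := by
  have hrest : (range' (a + 1) m).flatMap (fun i => replicate (u i) true ++ [false]) =
      replicate m false := by
    rw [flatMap_congr (g := pure ∘ fun _ => false), flatMap_pure_eq_map, map_const',
      length_range']
    intro i hi
    simp [hu i (by simp at hi; omega) (by simp at hi; omega)]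
  rw [range'_succ, flatMap_cons, hrest, replicate_succ]
  simp

theorem flatMap_range'_eq_runs (u : ℕ → ℕ) (c : ℕ) {a : ℕ} {ps : List ℕ}
    (hsorted : (a :: ps).Pairwise (· < ·)) (hlt : ∀ p ∈ a :: ps, p < c)
    (hu : ∀ i, a < i → i < c → i ∉ ps → u i = 0) :
    (range' a (c - a)).flatMap (fun i => replicate (u i) true ++ [false]) =
      ((a :: ps).zip (ps ++ [c])).flatMap
        fun pp => replicate (u pp.1) true ++ replicate (pp.2 - pp.1) false := by
  induction ps generalizing a with
  | nil =>
    have hac := hlt a mem_cons_self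
    obtain ⟨m, hm⟩ : ∃ m, c - a = m + 1 := ⟨c - a - 1, by omega⟩
    rw [hm, flatMap_range'_of_eq_zero u fun i h1 h2 => hu i h1 (by omega) not_mem_nil]
    simp [hm]
  | cons p ps ih =>
    obtain ⟨hap, hsorted⟩ := pairwise_cons.1 hsorted
    have hap : a < p := hap p mem_cons_self
    have hpc := hlt p (mem_cons_of_mem a mem_cons_self)
    have hsplit : range' a (c - a) = range' a (p - a - 1 + 1) ++ range' p (c - p) := by
      have h := range'_append (s := a) (m := p - a - 1 + 1) (n := c - p) (step := 1)
      rwa [show a + 1 * (p - a - 1 + 1) = p by omega, show p - a - 1 + 1 + (c - p) = c - a by omega,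
        eq_comm] at h
    rw [hsplit, flatMap_append, ih hsorted (fun q hq => hlt q (mem_cons_of_mem a hq))
      fun i h1 h2 hi => hu i (hap.trans h1) h2 (by simp [hi, h1.ne'])]
    rw [flatMap_range'_of_eq_zero u fun i h1 h2 => hu i h1 (by omega) ?_]
    · simp [show p - a - 1 + 1 = p - a by omega]
    · intro hi
      rcases mem_cons.1 hi with rfl | hi
      · omega
      · exact absurd ((pairwise_cons.1 hsorted).1 i hi) (by omega)

end List

theorem zip_map_diffs (f : ℕ → ℕ) (l : List ℕ) (c : ℕ) :
    ((0 :: l).map f).zip (diffs (l ++ [c])) =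
      ((0 :: l).zip (l ++ [c])).map fun pp => (f pp.1, pp.2 - pp.1) := by
  refine ext_getElem (by simp [diffs]) fun j h₁ h₂ => ?_
  have hj : j < (0 :: l).length := by simpa using h₂
  simp only [diffs, getElem_zip, getElem_map, getElem_zipWith, ← cons_append,
    getElem_append_left hj]

section LTRMinima

variable {n : ℕ} (σ : Equiv.Perm (Fin n))

-- Indexed by `ℕ` (and `0` from `n` on) so that runs of positions can be cut with `List.range'`.
def ltrAscent (k : ℕ) : ℕ :=
  if h : k < n then
    if IsLTRMin σ ⟨k, h⟩ then prevMinVal σ ⟨k, h⟩ - ((σ ⟨k, h⟩ : ℕ) + 1) else 0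
  else 0

theorem ltrAscent_val (i : Fin n) :
    ltrAscent σ i = if IsLTRMin σ i then prevMinVal σ i - ((σ i : ℕ) + 1) else 0 :=
  dif_pos i.isLt

theorem isLTRMin_of_val_eq_zero {i : Fin n} (hi : (i : ℕ) = 0) : IsLTRMin σ i :=
  fun j hj => absurd hj (by simp [Fin.lt_def, hi])

theorem lamWord_eq_flatMap_range :
    lamWord σ = (range n).flatMap fun k => replicate (ltrAscent σ k) true ++ [false] := by
  rw [← map_coe_finRange_eq_range, flatMap_map]
  rcases n with _ | m
  · rfl
  have hblock : ∀ i : Fin (m + 1), (if IsLTRMin σ i then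
      (if (i : ℕ) = 0 then [] else [false]) ++
        replicate (prevMinVal σ i - ((σ i : ℕ) + 1)) true else [false]) =
      (if (i : ℕ) = 0 then [] else [false]) ++ replicate (ltrAscent σ i) true := by
    intro i
    by_cases h : IsLTRMin σ i
    · simp [ltrAscent_val, h]
    · have hi : (i : ℕ) ≠ 0 := fun h0 => h (isLTRMin_of_val_eq_zero σ h0)
      simp [ltrAscent_val, h, hi]
  rw [lamWord, flatMap_congr fun i _ => hblock i, finRange_succ, flatMap_cons, flatMap_map,
    flatMap_cons, flatMap_map]
  simp only [Fin.val_zero, Fin.val_succ, Nat.succ_ne_zero, if_true, if_false, nil_append,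
    Nat.min_eq_right (Nat.le_add_left 1 m), replicate_one, append_assoc, flatMap_append_shift]

theorem prevMinVal_zero (hn : 0 < n) : prevMinVal σ ⟨0, hn⟩ = n + 1 := by
  simp [prevMinVal, Fin.lt_def]

variable {σ} in
theorem IsLTRMin.le_of_forall_not_isLTRMin {q i j : Fin n} (hq : IsLTRMin σ q) (hqi : q < i)
    (hgap : ∀ k, q < k → k < i → ¬ IsLTRMin σ k) (hj : j < i) : σ q ≤ σ j := by
  obtain ⟨k, hk, hmin⟩ := (Finset.univ.filter (· < i)).exists_min_image σ ⟨q, by simpa⟩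
  simp only [Finset.mem_filter, Finset.mem_univ, true_and] at hk hmin
  have hkmin : IsLTRMin σ k := fun l hl =>
    lt_of_le_of_ne (hmin l (hl.trans hk)) (σ.injective.ne hl.ne')
  have hqk : σ q ≤ σ k := by
    rcases lt_trichotomy k q with h | rfl | h
    · exact (hq k h).le
    · exact le_rfl
    · exact absurd hkmin (hgap k h hk)
  exact hqk.trans (hmin j hj)

variable {σ} in
theorem IsLTRMin.prevMinVal_eq {q i : Fin n} (hq : IsLTRMin σ q) (hqi : q < i)
    (hgap : ∀ k, q < k → k < i → ¬ IsLTRMin σ k) : prevMinVal σ i = (σ q : ℕ) + 1 := by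
  refine foldr_min_eq_of_mem (mem_map.2 ⟨q, by simpa [mem_filter] using hqi, rfl⟩)
    (by have := (σ q).isLt; omega) ?_
  simp only [mem_map, mem_filter, mem_finRange, true_and, decide_eq_true_eq]
  rintro _ ⟨j, hj, rfl⟩
  have := hq.le_of_forall_not_isLTRMin hqi hgap hj
  rw [Fin.le_def] at this
  omega

theorem mem_pminList {i : Fin n} : i ∈ pminList σ ↔ IsLTRMin σ i := by
  simp [pminList]

theorem pminList_sortedLT : (pminList σ).SortedLT :=
  sortedLT_iff_pairwise.2 ((sortedLT_iff_pairwise.1 (sortedLT_finRange n)).sublist filter_sublist)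

theorem pminList_eq_cons (hn : 0 < n) : ∃ t, pminList σ = ⟨0, hn⟩ :: t := by
  obtain ⟨m, rfl⟩ := Nat.exists_eq_succ_of_ne_zero hn.ne'
  rw [pminList, finRange_succ, filter_cons_of_pos (by simpa using isLTRMin_of_val_eq_zero σ rfl)]
  exact ⟨_, rfl⟩

theorem prevMinVal_pminList_succ {j : ℕ} (h : j + 1 < (pminList σ).length) :
    prevMinVal σ (pminList σ)[j + 1] = (σ (pminList σ)[j] : ℕ) + 1 := by
  have hs := pminList_sortedLT σ
  refine IsLTRMin.prevMinVal_eq ((mem_pminList σ).1 (getElem_mem _))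
    (hs.getElem_lt_getElem_iff.2 (Nat.lt_succ_self j)) fun k h₁ h₂ hk => ?_
  obtain ⟨m, hm, rfl⟩ := mem_iff_getElem.1 ((mem_pminList σ).2 hk)
  rw [hs.getElem_lt_getElem_iff] at h₁ h₂
  omega

theorem diffs_map_pminList :
    diffs ((pminList σ).map fun p => n - (σ p : ℕ)) =
      (pminList σ).map fun p => ltrAscent σ p.val := by
  refine ext_getElem (by simp [diffs]) fun j h₁ h₂ => ?_
  simp only [length_map] at h₂
  have hmin : IsLTRMin σ (pminList σ)[j] := (mem_pminList σ).1 (getElem_mem _)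
  simp only [diffs, getElem_zipWith, getElem_map, ltrAscent_val, if_pos hmin]
  cases j with
  | zero =>
    obtain ⟨t, ht⟩ := pminList_eq_cons σ (Fin.pos (pminList σ)[0])
    simp only [getElem_cons_zero, ht, prevMinVal_zero]
    omega
  | succ j =>
    rw [getElem_cons_succ, getElem_map, prevMinVal_pminList_succ σ h₂]
    have := (σ (pminList σ)[j]).isLt
    omega

theorem apply_getLast_pminList (h : pminList σ ≠ []) :
    (σ ((pminList σ).getLast h) : ℕ) = 0 := by
  set w := σ.symm ⟨0, Fin.pos ((pminList σ).getLast h)⟩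
  have hw : (σ w : ℕ) = 0 := by simp [w]
  have hwmin : IsLTRMin σ w := fun j hj => by
    have := σ.injective.ne hj.ne
    rw [Ne, Fin.ext_iff, hw] at this
    rw [Fin.lt_def, hw]
    omega
  obtain ⟨m, hm, hwm⟩ := mem_iff_getElem.1 ((mem_pminList σ).2 hwmin)
  have hle : w ≤ (pminList σ).getLast h := by
    rw [getLast_eq_getElem, ← hwm]
    exact (pminList_sortedLT σ).getElem_le_getElem_iff.2 (by omega)
  rcases hle.lt_or_eq with hlt | heq
  · have := (mem_pminList σ).1 (getLast_mem h) w hlt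
    rw [Fin.lt_def, hw] at this
    omega
  · rw [← heq, hw]

theorem lamWord_eq_runs :
    lamWord σ = (((pminList σ).map Fin.val).zip ((pminList σ).tail.map Fin.val ++ [n])).flatMap
      fun pp => replicate (ltrAscent σ pp.1) true ++ replicate (pp.2 - pp.1) false := by
  obtain rfl | hn := Nat.eq_zero_or_pos n
  · rfl
  obtain ⟨t, ht⟩ := pminList_eq_cons σ hn
  have hsorted : (0 :: t.map Fin.val).Pairwise (· < ·) := by
    have hs := sortedLT_iff_pairwise.1 (pminList_sortedLT σ)
    rw [ht] at hs
    exact (pairwise_map (f := Fin.val) (R := (· < ·))).2 hs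
  have hgap : ∀ k, 0 < k → k < n → k ∉ t.map Fin.val → ltrAscent σ k = 0 := by
    intro k hk₀ hk hkt
    simp only [ltrAscent, dif_pos hk, ite_eq_right_iff]
    intro hmin
    rcases mem_cons.1 (ht ▸ (mem_pminList σ).2 hmin) with h | h
    · simp [Fin.ext_iff] at h
      omega
    · exact absurd (mem_map_of_mem h) hkt
  have hruns := flatMap_range'_eq_runs (ltrAscent σ) n hsorted (by simp [hn]) hgap
  rw [Nat.sub_zero, ← range_eq_range'] at hruns
  rw [lamWord_eq_flatMap_range, hruns, ht]
  rfl

theorem pathOfCode_eq_runs :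
    pathOfCode n ((pminList σ).dropLast.map fun p => n - (σ p : ℕ))
      ((pminList σ).tail.map fun p => (p : ℕ)) =
    (((pminList σ).map Fin.val).zip ((pminList σ).tail.map Fin.val ++ [n])).flatMap
      fun pp => replicate (ltrAscent σ pp.1) true ++ replicate (pp.2 - pp.1) false := by
  obtain rfl | hn := Nat.eq_zero_or_pos n
  · rfl
  obtain ⟨t, ht⟩ := pminList_eq_cons σ hn
  have hne : pminList σ ≠ [] := by simp [ht]
  have hA : ((pminList σ).dropLast.map fun p => n - (σ p : ℕ)) ++ [n] =
      (pminList σ).map fun p => n - (σ p : ℕ) := by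
    conv_rhs => rw [← dropLast_append_getLast hne, map_append, map_singleton,
      apply_getLast_pminList σ hne, Nat.sub_zero]
  -- `fun p => (p : ℕ)` above elaborates to a monadic lift of the list, not to `Fin.val`.
  have hD : ((pminList σ).tail.map fun p => (p : ℕ)) = t.map Fin.val := by
    simp only [ht, tail_cons, map_id']
    exact flatMap_pure_eq_map Fin.val t
  have hasc : (pminList σ).map (fun p => ltrAscent σ p.val) =
      (0 :: t.map Fin.val).map (ltrAscent σ) := by
    simp [ht]
  rw [pathOfCode, hA, diffs_map_pminList, hD, hasc, zip_map_diffs, flatMap_map, ht]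
  rfl

end LTRMinima

/-- The ascent-descent code of λ(σ): `A_i = n + 1 - m_i` and `D_i = p_{i+1} - 1`
(values and positions taken 1-based). -/
theorem lamWord_code {n : ℕ} (σ : Equiv.Perm (Fin n)) :
    lamWord σ = pathOfCode n
      ((pminList σ).dropLast.map fun p => n - (σ p : ℕ))
      ((pminList σ).tail.map fun p => (p : ℕ)) :=
  (lamWord_eq_runs σ).trans (pathOfCode_eq_runs σ).symm
end
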